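/- arXiv:2507.20372 — 5 statements merged into one kernel-verified Lean document; each statement's English description precedes it below -/
import Mathlib

section
/- Define a₀(t,r) = 2λ(t² - r² + λ²)/((t² + r² + λ²)(t² + (r + λ)²)) and a₁(t,r) = 4λtr/((t² + r² + λ²)(t² + (r + λ)²)). Then ∂ₜa₁ - ∂ᵣa₀ = 4λ²/(t² + r² + λ²)². -/
/-!
With `A = t² + r² + λ²` and `B = t² + (r + λ)² = A + 2λr`, partial fractions give
`a₁ = 2t/A - 2t/B` and `a₀ = 2(r + λ)/B - 2r/A`. The `B`-part is `(∂_ρ, -∂_t) log (t² + ρ²)` at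
`ρ = r + λ`, whose curl is `-Δ log (t² + ρ²) = 0`; the `A`-part contributes
`∂ₜ(2t/A) + ∂ᵣ(2r/A) = 4/A - 4(t² + r²)/A² = 4λ²/A²`.
-/

noncomputable section

def vortexA₀ (lam t r : ℝ) : ℝ :=
  2 * lam * (t ^ 2 - r ^ 2 + lam ^ 2) / ((t ^ 2 + r ^ 2 + lam ^ 2) * (t ^ 2 + (r + lam) ^ 2))

def vortexA₁ (lam t r : ℝ) : ℝ :=
  4 * lam * t * r / ((t ^ 2 + r ^ 2 + lam ^ 2) * (t ^ 2 + (r + lam) ^ 2))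

end

section PartialFractions

variable {lam t r : ℝ}

theorem vortexA₀_eq_sub (hA : t ^ 2 + r ^ 2 + lam ^ 2 ≠ 0) (hB : t ^ 2 + (r + lam) ^ 2 ≠ 0) :
    vortexA₀ lam t r =
      2 * (r + lam) / ((r + lam) ^ 2 + t ^ 2) - 2 * r / (r ^ 2 + (t ^ 2 + lam ^ 2)) := by
  have hA' : r ^ 2 + (t ^ 2 + lam ^ 2) ≠ 0 := fun h => hA (by linear_combination h)
  have hB' : (r + lam) ^ 2 + t ^ 2 ≠ 0 := fun h => hB (by linear_combination h)
  unfold vortexA₀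
  field_simp
  ring

theorem vortexA₁_eq_sub (hA : t ^ 2 + r ^ 2 + lam ^ 2 ≠ 0) (hB : t ^ 2 + (r + lam) ^ 2 ≠ 0) :
    vortexA₁ lam t r =
      2 * t / (t ^ 2 + (r ^ 2 + lam ^ 2)) - 2 * t / (t ^ 2 + (r + lam) ^ 2) := by
  have hA' : t ^ 2 + (r ^ 2 + lam ^ 2) ≠ 0 := fun h => hA (by linear_combination h)
  unfold vortexA₁
  field_simp
  ring

end PartialFractions

theorem hasDerivAt_two_mul_div_sq_add {c x : ℝ} (h : x ^ 2 + c ≠ 0) :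
    HasDerivAt (fun s => 2 * s / (s ^ 2 + c)) (2 * (c - x ^ 2) / (x ^ 2 + c) ^ 2) x := by
  have hnum : HasDerivAt (fun s : ℝ => 2 * s) 2 x := by
    simpa using (hasDerivAt_id x).const_mul (2 : ℝ)
  have hden : HasDerivAt (fun s : ℝ => s ^ 2 + c) (2 * x) x := by
    simpa using (hasDerivAt_pow 2 x).add_const c
  exact (hnum.div hden h).congr_deriv (by ring)

/-- The U(1) gauge field of the hyperbolic 1-vortex has field strength
`F₀₁ = ∂ₜa₁ - ∂ᵣa₀ = 4λ²/(t² + r² + λ²)²`. -/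
theorem vortex_field_strength (lam : ℝ) (hlam : 0 < lam) (t r : ℝ) (hr : 0 < r) :
    let a₀ : ℝ → ℝ → ℝ := fun t r =>
      2 * lam * (t ^ 2 - r ^ 2 + lam ^ 2) /
        ((t ^ 2 + r ^ 2 + lam ^ 2) * (t ^ 2 + (r + lam) ^ 2))
    let a₁ : ℝ → ℝ → ℝ := fun t r =>
      4 * lam * t * r / ((t ^ 2 + r ^ 2 + lam ^ 2) * (t ^ 2 + (r + lam) ^ 2))
    deriv (fun s => a₁ s r) t - deriv (fun s => a₀ t s) r =
      4 * lam ^ 2 / (t ^ 2 + r ^ 2 + lam ^ 2) ^ 2 := by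
  show deriv (fun s => vortexA₁ lam s r) t - deriv (fun s => vortexA₀ lam t s) r = _
  have h₁ : HasDerivAt (fun s => vortexA₁ lam s r)
      (2 * (r ^ 2 + lam ^ 2 - t ^ 2) / (t ^ 2 + (r ^ 2 + lam ^ 2)) ^ 2 -
        2 * ((r + lam) ^ 2 - t ^ 2) / (t ^ 2 + (r + lam) ^ 2) ^ 2) t := by
    rw [funext fun s => vortexA₁_eq_sub (by positivity) (by positivity)]
    exact (hasDerivAt_two_mul_div_sq_add (by positivity)).sub
      (hasDerivAt_two_mul_div_sq_add (by positivity))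
  have h₀ : HasDerivAt (fun s => vortexA₀ lam t s)
      (2 * (t ^ 2 - (r + lam) ^ 2) / ((r + lam) ^ 2 + t ^ 2) ^ 2 -
        2 * (t ^ 2 + lam ^ 2 - r ^ 2) / (r ^ 2 + (t ^ 2 + lam ^ 2)) ^ 2) r := by
    refine ((hasDerivAt_two_mul_div_sq_add (by positivity)).comp_add_const r lam).sub
      (hasDerivAt_two_mul_div_sq_add (by positivity)) |>.congr_of_eventuallyEq ?_
    filter_upwards [Ioi_mem_nhds hr] with s (hs : 0 < s)
    exact vortexA₀_eq_sub (by positivity) (by positivity)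
  rw [h₁.deriv, h₀.deriv]
  have hA : t ^ 2 + r ^ 2 + lam ^ 2 ≠ 0 := by positivity
  have hB : t ^ 2 + (r + lam) ^ 2 ≠ 0 := by positivity
  field_simp
  ring
end

section
/- The hyperbolic 1-vortex fields φ₁ = (t² + r² - λ²)/(t² + r² + λ²), φ₂ = -2λt/(t² + r² + λ²), a₀ = 2λ(t² - r² + λ²)/((t² + r² + λ²)(t² + (r + λ)²)), a₁ = 4λtr/((t² + r² + λ²)(t² + (r + λ)²)) satisfy the vortex (Bogomolnyi) equations: ∂ₜa₁ - ∂ᵣa₀ = (1 - φ₁² - φ₂²)/r², ∂ₜφ₁ + a₀φ₂ = ∂ᵣφ₂ - a₁φ₁, and ∂ₜφ₂ - a₀φ₁ = -(∂ᵣφ₁ + a₁φ₂). -/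
/-!
With `D = t² + r² + λ²` and `E = t² + (r + λ)² = |z + iλ|²` (`z = t + ir`), the gauge field is
`a₁ = ∂ₜ log (D / E)`, `a₀ = -∂ᵣ log (D / E)`. Hence `∂ₜa₁ - ∂ᵣa₀ = Δ log D - Δ log E`, where
`log E` is harmonic and `Δ log D = 4λ²/D² = (1 - φ₁² - φ₂²)/r²`. The other two equations are
rational identities once the partial derivatives are known in closed form.
-/

namespace HyperbolicVortex

noncomputable section

variable (lam : ℝ)

def φ₁ (t r : ℝ) : ℝ := (t ^ 2 + r ^ 2 - lam ^ 2) / (t ^ 2 + r ^ 2 + lam ^ 2)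

def φ₂ (t r : ℝ) : ℝ := -(2 * lam * t) / (t ^ 2 + r ^ 2 + lam ^ 2)

def a₀ (t r : ℝ) : ℝ :=
  2 * lam * (t ^ 2 - r ^ 2 + lam ^ 2) / ((t ^ 2 + r ^ 2 + lam ^ 2) * (t ^ 2 + (r + lam) ^ 2))

def a₁ (t r : ℝ) : ℝ :=
  4 * lam * t * r / ((t ^ 2 + r ^ 2 + lam ^ 2) * (t ^ 2 + (r + lam) ^ 2))

variable {lam} {t r : ℝ}

theorem hasDerivAt_φ₁_fst (hD : t ^ 2 + r ^ 2 + lam ^ 2 ≠ 0) :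
    HasDerivAt (fun s ↦ φ₁ lam s r) (4 * lam ^ 2 * t / (t ^ 2 + r ^ 2 + lam ^ 2) ^ 2) t := by
  have hN := (hasDerivAt_pow 2 t).add_const (r ^ 2) |>.sub_const (lam ^ 2)
  have hD' := (hasDerivAt_pow 2 t).add_const (r ^ 2) |>.add_const (lam ^ 2)
  refine (hN.fun_div hD' hD).congr_deriv ?_
  field_simp
  ring

theorem hasDerivAt_φ₁_snd (hD : t ^ 2 + r ^ 2 + lam ^ 2 ≠ 0) :
    HasDerivAt (fun s ↦ φ₁ lam t s) (4 * lam ^ 2 * r / (t ^ 2 + r ^ 2 + lam ^ 2) ^ 2) r := by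
  have hN := (hasDerivAt_pow 2 r).const_add (t ^ 2) |>.sub_const (lam ^ 2)
  have hD' := (hasDerivAt_pow 2 r).const_add (t ^ 2) |>.add_const (lam ^ 2)
  refine (hN.fun_div hD' hD).congr_deriv ?_
  field_simp
  ring

theorem hasDerivAt_φ₂_fst (hD : t ^ 2 + r ^ 2 + lam ^ 2 ≠ 0) :
    HasDerivAt (fun s ↦ φ₂ lam s r)
      (2 * lam * (t ^ 2 - r ^ 2 - lam ^ 2) / (t ^ 2 + r ^ 2 + lam ^ 2) ^ 2) t := by
  have hN := ((hasDerivAt_id' t).const_mul (2 * lam)).fun_neg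
  have hD' := (hasDerivAt_pow 2 t).add_const (r ^ 2) |>.add_const (lam ^ 2)
  refine (hN.fun_div hD' hD).congr_deriv ?_
  field_simp
  ring

theorem hasDerivAt_φ₂_snd (hD : t ^ 2 + r ^ 2 + lam ^ 2 ≠ 0) :
    HasDerivAt (fun s ↦ φ₂ lam t s) (4 * lam * t * r / (t ^ 2 + r ^ 2 + lam ^ 2) ^ 2) r := by
  have hD' := (hasDerivAt_pow 2 r).const_add (t ^ 2) |>.add_const (lam ^ 2)
  refine ((hasDerivAt_const r (-(2 * lam * t))).fun_div hD' hD).congr_deriv ?_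
  field_simp
  ring

theorem hasDerivAt_a₁_fst (hD : t ^ 2 + r ^ 2 + lam ^ 2 ≠ 0) (hE : t ^ 2 + (r + lam) ^ 2 ≠ 0) :
    HasDerivAt (fun s ↦ a₁ lam s r)
      (2 * (r ^ 2 + lam ^ 2 - t ^ 2) / (t ^ 2 + r ^ 2 + lam ^ 2) ^ 2 -
        2 * ((r + lam) ^ 2 - t ^ 2) / (t ^ 2 + (r + lam) ^ 2) ^ 2) t := by
  have hN := ((hasDerivAt_id' t).const_mul (4 * lam)).mul_const r
  have hD' := (hasDerivAt_pow 2 t).add_const (r ^ 2) |>.add_const (lam ^ 2)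
  have hE' := (hasDerivAt_pow 2 t).add_const ((r + lam) ^ 2)
  refine (hN.fun_div (hD'.fun_mul hE') (mul_ne_zero hD hE)).congr_deriv ?_
  field_simp
  ring

theorem hasDerivAt_a₀_snd (hD : t ^ 2 + r ^ 2 + lam ^ 2 ≠ 0) (hE : t ^ 2 + (r + lam) ^ 2 ≠ 0) :
    HasDerivAt (fun s ↦ a₀ lam t s)
      (2 * (t ^ 2 - (r + lam) ^ 2) / (t ^ 2 + (r + lam) ^ 2) ^ 2 -
        2 * (t ^ 2 + lam ^ 2 - r ^ 2) / (t ^ 2 + r ^ 2 + lam ^ 2) ^ 2) r := by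
  have hN := (((hasDerivAt_pow 2 r).const_sub (t ^ 2)).add_const (lam ^ 2)).const_mul (2 * lam)
  have hD' := (hasDerivAt_pow 2 r).const_add (t ^ 2) |>.add_const (lam ^ 2)
  have hE' := (((hasDerivAt_id' r).add_const lam).fun_pow 2).const_add (t ^ 2)
  refine (hN.fun_div (hD'.fun_mul hE') (mul_ne_zero hD hE)).congr_deriv ?_
  field_simp
  ring

theorem bogomolnyi_equations (hr : r ≠ 0) (hD : t ^ 2 + r ^ 2 + lam ^ 2 ≠ 0)
    (hE : t ^ 2 + (r + lam) ^ 2 ≠ 0) :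
    (deriv (fun s ↦ a₁ lam s r) t - deriv (fun s ↦ a₀ lam t s) r =
      (1 - φ₁ lam t r ^ 2 - φ₂ lam t r ^ 2) / r ^ 2) ∧
    (deriv (fun s ↦ φ₁ lam s r) t + a₀ lam t r * φ₂ lam t r =
      deriv (fun s ↦ φ₂ lam t s) r - a₁ lam t r * φ₁ lam t r) ∧
    (deriv (fun s ↦ φ₂ lam s r) t - a₀ lam t r * φ₁ lam t r =
      -(deriv (fun s ↦ φ₁ lam t s) r + a₁ lam t r * φ₂ lam t r)) := by
  rw [(hasDerivAt_a₁_fst hD hE).deriv, (hasDerivAt_a₀_snd hD hE).deriv,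
    (hasDerivAt_φ₁_fst hD).deriv, (hasDerivAt_φ₁_snd hD).deriv,
    (hasDerivAt_φ₂_fst hD).deriv, (hasDerivAt_φ₂_snd hD).deriv]
  unfold φ₁ φ₂ a₀ a₁
  refine ⟨?_, ?_, ?_⟩ <;> field_simp <;> ring

end

end HyperbolicVortex

/-- The hyperbolic 1-vortex fields satisfy the vortex (Bogomolnyi) equations on ℍ². -/
theorem vortex_bogomolnyi (lam : ℝ) (hlam : 0 < lam) (t r : ℝ) (hr : 0 < r) :
    let φ₁ : ℝ → ℝ → ℝ := fun t r =>
      (t ^ 2 + r ^ 2 - lam ^ 2) / (t ^ 2 + r ^ 2 + lam ^ 2)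
    let φ₂ : ℝ → ℝ → ℝ := fun t r =>
      -(2 * lam * t) / (t ^ 2 + r ^ 2 + lam ^ 2)
    let a₀ : ℝ → ℝ → ℝ := fun t r =>
      2 * lam * (t ^ 2 - r ^ 2 + lam ^ 2) /
        ((t ^ 2 + r ^ 2 + lam ^ 2) * (t ^ 2 + (r + lam) ^ 2))
    let a₁ : ℝ → ℝ → ℝ := fun t r =>
      4 * lam * t * r / ((t ^ 2 + r ^ 2 + lam ^ 2) * (t ^ 2 + (r + lam) ^ 2))
    (deriv (fun s => a₁ s r) t - deriv (fun s => a₀ t s) r =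
      (1 - (φ₁ t r) ^ 2 - (φ₂ t r) ^ 2) / r ^ 2) ∧
    (deriv (fun s => φ₁ s r) t + a₀ t r * φ₂ t r =
      deriv (fun s => φ₂ t s) r - a₁ t r * φ₁ t r) ∧
    (deriv (fun s => φ₂ s r) t - a₀ t r * φ₁ t r =
      -(deriv (fun s => φ₁ t s) r + a₁ t r * φ₂ t r)) :=
  HyperbolicVortex.bogomolnyi_equations hr.ne' (by positivity) (by positivity)
end

section
/- The integral ∫₋∞^∞ ∫₀^∞ 4λ²/(t² + r² + λ²)² dr dt equals 2π, for any λ > 0. Hence the vortex number N_v = (1/2π)∫∫ F₀₁ dt dr of the hyperbolic 1-vortex equals 1. -/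
/-!
Both integrations are elementary. For fixed `t`, put `s = √(t² + λ²)`; the antiderivative
`(r / (r² + s²) + arctan (r / s) / s) / (2 s²)` gives `∫₀^∞ (r² + s²)⁻² dr = π / (4 s³)`, so the
inner integral is `π λ² / (t² + λ²)^(3/2)`. The antiderivative `t / (λ² √(t² + λ²))` then gives
`∫ (t² + λ²)^(-3/2) dt = 2 / λ²`, and the flux is `2π`.
-/

open MeasureTheory Set Filter Topology Real

lemma tendsto_one_add_div_sq_atTop (a : ℝ) :
    Tendsto (fun r : ℝ => 1 + a / r ^ 2) atTop (𝓝 1) := by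
  simpa using (tendsto_const_nhds (x := a)).div_atTop (tendsto_pow_atTop (α := ℝ) two_ne_zero)
    |>.const_add 1

lemma tendsto_div_sq_add_atTop_zero (a : ℝ) :
    Tendsto (fun r : ℝ => r / (r ^ 2 + a)) atTop (𝓝 0) := by
  have h := tendsto_inv_atTop_zero.div (tendsto_one_add_div_sq_atTop a) one_ne_zero
  rw [zero_div] at h
  refine h.congr' ?_
  filter_upwards [eventually_gt_atTop 0] with r hr
  simp only [Pi.div_apply]
  rw [one_add_div (by positivity)]
  field_simp

lemma tendsto_div_sqrt_sq_add_atTop_one (a : ℝ) :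
    Tendsto (fun t : ℝ => t / √(t ^ 2 + a)) atTop (𝓝 1) := by
  have h := ((tendsto_one_add_div_sq_atTop a).sqrt).inv₀ (by simp)
  rw [sqrt_one, inv_one] at h
  refine h.congr' ?_
  filter_upwards [eventually_gt_atTop 0] with t ht
  have hfactor : t ^ 2 + a = t ^ 2 * (1 + a / t ^ 2) := by field_simp
  rw [hfactor, sqrt_mul (sq_nonneg t), sqrt_sq ht.le, div_mul_cancel_left₀ ht.ne']

theorem integral_Ioi_inv_sq_add_sq_sq {b : ℝ} (hb : 0 < b) :
    ∫ r in Ioi 0, ((r ^ 2 + b ^ 2) ^ 2)⁻¹ = π / (4 * b ^ 3) := by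
  have hderiv : ∀ r ∈ Ici (0 : ℝ), HasDerivAt
      (fun r => (r / (r ^ 2 + b ^ 2) + arctan (r / b) / b) / (2 * b ^ 2))
      ((r ^ 2 + b ^ 2) ^ 2)⁻¹ r := by
    intro r _
    have hrb : r ^ 2 + b ^ 2 ≠ 0 := by positivity
    refine ((((hasDerivAt_id' r).fun_div ((hasDerivAt_pow 2 r).add_const (b ^ 2)) hrb).add
      (((hasDerivAt_id' r).div_const b).arctan.div_const b)).div_const (2 * b ^ 2)).congr_deriv ?_
    field_simp
    ring
  have hlim : Tendsto (fun r => (r / (r ^ 2 + b ^ 2) + arctan (r / b) / b) / (2 * b ^ 2))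
      atTop (𝓝 (π / (4 * b ^ 3))) := by
    have harctan : Tendsto (fun r => arctan (r / b)) atTop (𝓝 (π / 2)) :=
      (tendsto_arctan_atTop.mono_right nhdsWithin_le_nhds).comp (tendsto_id.atTop_div_const hb)
    convert ((tendsto_div_sq_add_atTop_zero (b ^ 2)).add (harctan.div_const b)).div_const
      (2 * b ^ 2) using 2
    field_simp
    ring
  rw [integral_Ioi_of_hasDerivAt_of_nonneg' hderiv (fun r _ => by positivity) hlim]
  simp

theorem integral_Ioi_inv_sqrt_sq_add_sq_pow_three {c : ℝ} (hc : c ≠ 0) :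
    ∫ t in Ioi 0, (√(t ^ 2 + c ^ 2) ^ 3)⁻¹ = (c ^ 2)⁻¹ := by
  have hderiv : ∀ t ∈ Ici (0 : ℝ), HasDerivAt (fun t => t / √(t ^ 2 + c ^ 2) / c ^ 2)
      (√(t ^ 2 + c ^ 2) ^ 3)⁻¹ t := by
    intro t _
    have hpos : 0 < t ^ 2 + c ^ 2 := by positivity
    have hsq := sq_sqrt hpos.le
    refine (((hasDerivAt_id' t).fun_div (((hasDerivAt_pow 2 t).add_const (c ^ 2)).sqrt hpos.ne')
      (sqrt_pos.2 hpos).ne').div_const (c ^ 2)).congr_deriv ?_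
    field_simp
    norm_num
    linear_combination 2 * hsq
  have hlim := (tendsto_div_sqrt_sq_add_atTop_one (c ^ 2)).div_const (c ^ 2)
  rw [integral_Ioi_of_hasDerivAt_of_nonneg' hderiv (fun t _ => by positivity) (by simpa using hlim)]
  simp

theorem integral_inv_sqrt_sq_add_sq_pow_three {c : ℝ} (hc : c ≠ 0) :
    ∫ t, (√(t ^ 2 + c ^ 2) ^ 3)⁻¹ = 2 / c ^ 2 := by
  have h := integral_comp_abs (f := fun t => (√(t ^ 2 + c ^ 2) ^ 3)⁻¹)
  simp only [sq_abs, integral_Ioi_inv_sqrt_sq_add_sq_pow_three hc] at h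
  rw [h, div_eq_mul_inv]

/-- The total flux of the hyperbolic 1-vortex field strength over the half plane is `2π`,
so the vortex number `N_v = (1/2π)∫∫ F₀₁` equals `1`. -/
theorem vortex_number_one (lam : ℝ) (hlam : 0 < lam) :
    (∫ t : ℝ, ∫ r in Set.Ioi (0 : ℝ),
        4 * lam ^ 2 / (t ^ 2 + r ^ 2 + lam ^ 2) ^ 2) = 2 * Real.pi ∧
    (1 / (2 * Real.pi)) *
      (∫ t : ℝ, ∫ r in Set.Ioi (0 : ℝ),
        4 * lam ^ 2 / (t ^ 2 + r ^ 2 + lam ^ 2) ^ 2) = 1 := by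
  have hinner (t : ℝ) : ∫ r in Ioi (0 : ℝ), 4 * lam ^ 2 / (t ^ 2 + r ^ 2 + lam ^ 2) ^ 2 =
      π * lam ^ 2 * (√(t ^ 2 + lam ^ 2) ^ 3)⁻¹ := by
    have hs : 0 < √(t ^ 2 + lam ^ 2) := by positivity
    have hsq : √(t ^ 2 + lam ^ 2) ^ 2 = t ^ 2 + lam ^ 2 := sq_sqrt (by positivity)
    calc _ = ∫ r in Ioi (0 : ℝ), 4 * lam ^ 2 * ((r ^ 2 + √(t ^ 2 + lam ^ 2) ^ 2) ^ 2)⁻¹ := by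
          congr with r
          rw [hsq]
          ring
      _ = _ := by
          rw [integral_const_mul, integral_Ioi_inv_sq_add_sq_sq hs]
          field_simp
  have hflux : (∫ t : ℝ, ∫ r in Ioi (0 : ℝ), 4 * lam ^ 2 / (t ^ 2 + r ^ 2 + lam ^ 2) ^ 2) =
      2 * π := by
    simp only [hinner]
    rw [integral_const_mul, integral_inv_sqrt_sq_add_sq_pow_three hlam.ne']
    field_simp
  exact ⟨hflux, by rw [hflux]; field_simp⟩
end

section
/- Let f : D → ℂ be holomorphic on the open unit disk D and let ρ(w) = -log(½(1 - |f(w)|²)) + ½ log|f'(w)|², defined where |f(w)| < 1 and f'(w) ≠ 0. Then ρ satisfies the Liouville equation Δρ = e^{2ρ}, where Δ = 4∂_w∂_{w̄} is the standard Laplacian. -/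
/-!
For `g` holomorphic and `F` twice differentiable, `Δ F(|g|²) = 4|g'|² (N F''(N) + F'(N))` with
`N = |g|²`: along the directions `1` and `i` the terms in `g''` of the second derivatives of `|g|²`
cancel, while the squares of the first derivatives add up to `4|g|²|g'|²`. With `g = f` and
`F(N) = -log((1 - N)/2)` this gives `4|f'|²/(1 - |f|²)² = e^{2ρ}`; with `g = f'` and
`F(N) = ½ log N` it gives `0`, i.e. `log |f'|` is harmonic.
-/

open Complex Filter Topology

-- Unlike `iteratedDeriv 2 u t = a`, this records that the derivatives exist, so it is additive.
def HasSecondDerivAt (u : ℝ → ℝ) (a t : ℝ) : Prop :=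
  ∃ u' : ℝ → ℝ, (∀ᶠ s in 𝓝 t, HasDerivAt u (u' s) s) ∧ HasDerivAt u' a t

namespace HasSecondDerivAt

variable {u v : ℝ → ℝ} {a b t : ℝ}

theorem iteratedDeriv_eq (h : HasSecondDerivAt u a t) : iteratedDeriv 2 u t = a := by
  obtain ⟨u', hu, hu'⟩ := h
  rw [iteratedDeriv_succ, iteratedDeriv_one]
  exact (hu'.congr_of_eventuallyEq (hu.mono fun s hs => hs.deriv)).deriv

theorem add (hu : HasSecondDerivAt u a t) (hv : HasSecondDerivAt v b t) :
    HasSecondDerivAt (fun s => u s + v s) (a + b) t := by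
  obtain ⟨u', hu, hu'⟩ := hu
  obtain ⟨v', hv, hv'⟩ := hv
  exact ⟨fun s => u' s + v' s, (hu.and hv).mono fun s hs => hs.1.add hs.2, hu'.add hv'⟩

theorem comp {φ φ' F F' : ℝ → ℝ} {φ'' F'' : ℝ} (hφ : ∀ᶠ s in 𝓝 t, HasDerivAt φ (φ' s) s)
    (hφ' : HasDerivAt φ' φ'' t) (hF : ∀ᶠ y in 𝓝 (φ t), HasDerivAt F (F' y) y)
    (hF' : HasDerivAt F' F'' (φ t)) :
    HasSecondDerivAt (fun s => F (φ s)) (F'' * φ' t ^ 2 + F' (φ t) * φ'') t := by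
  have hφt : HasDerivAt φ (φ' t) t := hφ.self_of_nhds
  have hFφ := hφt.continuousAt.eventually hF
  refine ⟨fun s => F' (φ s) * φ' s, (hφ.and hFφ).mono fun s hs => hs.2.comp s hs.1, ?_⟩
  exact ((hF'.comp t hφt).mul hφ').congr_deriv (by simp only [Function.comp_apply]; ring)

end HasSecondDerivAt

theorem eventually_hasDerivAt_norm_sq {E : Type*} [NormedAddCommGroup E] [InnerProductSpace ℝ E]
    {q q' : ℝ → E} {a : E} {t : ℝ}
    (hq : ∀ᶠ s in 𝓝 t, HasDerivAt q (q' s) s) (hq' : HasDerivAt q' a t) :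
    (∀ᶠ s in 𝓝 t, HasDerivAt (fun s => ‖q s‖ ^ 2) (2 * inner ℝ (q s) (q' s)) s) ∧
      HasDerivAt (fun s => 2 * inner ℝ (q s) (q' s)) (2 * (‖q' t‖ ^ 2 + inner ℝ (q t) a)) t := by
  refine ⟨hq.mono fun s hs => hs.norm_sq, ?_⟩
  exact (((hq.self_of_nhds).inner ℝ hq').const_mul 2).congr_deriv
    (by rw [real_inner_self_eq_norm_sq, add_comm])

theorem AnalyticAt.eventually_hasDerivAt_comp_line {g : ℂ → ℂ} {L : ℝ → ℂ} {d : ℂ} {t : ℝ}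
    (hL : ∀ s, HasDerivAt L d s) (hg : AnalyticAt ℂ g (L t)) :
    (∀ᶠ s in 𝓝 t, HasDerivAt (fun s => g (L s)) (d * deriv g (L s)) s) ∧
      HasDerivAt (fun s => d * deriv g (L s)) (d ^ 2 * deriv (deriv g) (L t)) t := by
  refine ⟨((hL t).continuousAt.eventually hg.eventually_analyticAt).mono fun s hs =>
    hs.differentiableAt.hasDerivAt.scomp s (hL s), ?_⟩
  exact ((hg.deriv.differentiableAt.hasDerivAt.scomp t (hL t)).const_mul d).congr_deriv
    (by rw [smul_eq_mul, sq, mul_assoc])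

theorem AnalyticAt.hasSecondDerivAt_comp_norm_sq_line {g : ℂ → ℂ} {F F' : ℝ → ℝ} {F'' : ℝ}
    {L : ℝ → ℂ} {d z : ℂ} {t : ℝ} (hL : ∀ s, HasDerivAt L d s) (ht : L t = z)
    (hg : AnalyticAt ℂ g z) (hF : ∀ᶠ y in 𝓝 (‖g z‖ ^ 2), HasDerivAt F (F' y) y)
    (hF' : HasDerivAt F' F'' (‖g z‖ ^ 2)) :
    HasSecondDerivAt (fun s => F (‖g (L s)‖ ^ 2))
      (F'' * (2 * inner ℝ (g z) (d * deriv g z)) ^ 2 +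
        F' (‖g z‖ ^ 2) *
          (2 * (‖d * deriv g z‖ ^ 2 + inner ℝ (g z) (d ^ 2 * deriv (deriv g) z)))) t := by
  subst ht
  obtain ⟨hgL, hgL'⟩ := hg.eventually_hasDerivAt_comp_line hL
  obtain ⟨hN, hN'⟩ := eventually_hasDerivAt_norm_sq hgL hgL'
  exact HasSecondDerivAt.comp hN hN' hF hF'

def HasLaplacianAt (u : ℂ → ℝ) (a : ℝ) (z : ℂ) : Prop :=
  ∃ a₁ a₂, HasSecondDerivAt (fun x : ℝ => u (x + z.im * I)) a₁ z.re ∧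
    HasSecondDerivAt (fun y : ℝ => u (z.re + y * I)) a₂ z.im ∧ a₁ + a₂ = a

namespace HasLaplacianAt

variable {u v : ℂ → ℝ} {a b : ℝ} {z : ℂ}

theorem iteratedDeriv_add_iteratedDeriv_eq (h : HasLaplacianAt u a z) :
    iteratedDeriv 2 (fun x : ℝ => u (x + z.im * I)) z.re +
      iteratedDeriv 2 (fun y : ℝ => u (z.re + y * I)) z.im = a := by
  obtain ⟨a₁, a₂, h₁, h₂, rfl⟩ := h
  rw [h₁.iteratedDeriv_eq, h₂.iteratedDeriv_eq]

theorem add (hu : HasLaplacianAt u a z) (hv : HasLaplacianAt v b z) :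
    HasLaplacianAt (fun z => u z + v z) (a + b) z := by
  obtain ⟨a₁, a₂, hu₁, hu₂, rfl⟩ := hu
  obtain ⟨b₁, b₂, hv₁, hv₂, rfl⟩ := hv
  exact ⟨a₁ + b₁, a₂ + b₂, hu₁.add hv₁, hu₂.add hv₂, by ring⟩

end HasLaplacianAt

theorem Complex.inner_sq_add_inner_I_mul_sq (w z : ℂ) :
    inner ℝ w z ^ 2 + inner ℝ w (I * z) ^ 2 = ‖w‖ ^ 2 * ‖z‖ ^ 2 := by
  simp only [Complex.inner, mul_re, mul_im, I_re, I_im, conj_re, conj_im, ← normSq_eq_norm_sq,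
    normSq_apply]
  ring

theorem AnalyticAt.hasLaplacianAt_comp_norm_sq {g : ℂ → ℂ} {F F' : ℝ → ℝ} {F'' : ℝ} {z : ℂ}
    (hg : AnalyticAt ℂ g z) (hF : ∀ᶠ y in 𝓝 (‖g z‖ ^ 2), HasDerivAt F (F' y) y)
    (hF' : HasDerivAt F' F'' (‖g z‖ ^ 2)) :
    HasLaplacianAt (fun z => F (‖g z‖ ^ 2))
      (4 * ‖deriv g z‖ ^ 2 * (‖g z‖ ^ 2 * F'' + F' (‖g z‖ ^ 2))) z := by
  have hx : ∀ s : ℝ, HasDerivAt (fun x : ℝ => (x : ℂ) + z.im * I) 1 s := fun s =>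
    (hasDerivAt_id (s : ℂ)).comp_ofReal.add_const _
  have hy : ∀ s : ℝ, HasDerivAt (fun y : ℝ => (z.re : ℂ) + y * I) I s := fun s => by
    simpa using ((hasDerivAt_id (s : ℂ)).comp_ofReal.mul_const I).const_add (z.re : ℂ)
  refine ⟨_, _, hg.hasSecondDerivAt_comp_norm_sq_line hx (re_add_im z) hF hF',
    hg.hasSecondDerivAt_comp_norm_sq_line hy (re_add_im z) hF hF', ?_⟩
  -- the terms in `deriv (deriv g)` cancel since `1 ^ 2 = -I ^ 2`
  have hI := Complex.inner_sq_add_inner_I_mul_sq (g z) (deriv g z)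
  simp only [one_mul, one_pow, I_sq, neg_one_mul, inner_neg_right, norm_mul, norm_I]
  linear_combination 4 * F'' * hI

theorem AnalyticAt.hasLaplacianAt_neg_log_one_sub_norm_sq {g : ℂ → ℂ} {z : ℂ}
    (hg : AnalyticAt ℂ g z) (hz : ‖g z‖ < 1) :
    HasLaplacianAt (fun z => -Real.log ((1 - ‖g z‖ ^ 2) / 2))
      (4 * ‖deriv g z‖ ^ 2 / (1 - ‖g z‖ ^ 2) ^ 2) z := by
  have hN : ‖g z‖ ^ 2 < 1 := by nlinarith [norm_nonneg (g z)]
  have hF : ∀ᶠ y in 𝓝 (‖g z‖ ^ 2), HasDerivAt (fun y => -Real.log ((1 - y) / 2)) (1 - y)⁻¹ y := by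
    filter_upwards [eventually_lt_nhds hN] with y hy
    refine ((((hasDerivAt_id' y).const_sub 1).div_const 2).log ?_).neg.congr_deriv ?_
    · linarith
    · field_simp [(sub_pos.2 hy).ne']
  have hF' : HasDerivAt (fun y => (1 - y)⁻¹) ((1 - ‖g z‖ ^ 2) ^ 2)⁻¹ (‖g z‖ ^ 2) :=
    (((hasDerivAt_id _).const_sub 1).inv (sub_pos.2 hN).ne').congr_deriv (by simp)
  convert hg.hasLaplacianAt_comp_norm_sq hF hF' using 1
  field_simp [(sub_pos.2 hN).ne']
  ring

theorem AnalyticAt.hasLaplacianAt_half_log_norm_sq {g : ℂ → ℂ} {z : ℂ}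
    (hg : AnalyticAt ℂ g z) (hz : g z ≠ 0) :
    HasLaplacianAt (fun z => 1 / 2 * Real.log (‖g z‖ ^ 2)) 0 z := by
  have hN : ‖g z‖ ^ 2 ≠ 0 := by positivity
  have hF : ∀ᶠ y in 𝓝 (‖g z‖ ^ 2), HasDerivAt (fun y => 1 / 2 * Real.log y) (2 * y)⁻¹ y := by
    filter_upwards [eventually_ne_nhds hN] with y hy
    exact ((Real.hasDerivAt_log hy).const_mul _).congr_deriv (by field_simp)
  have hF' : HasDerivAt (fun y => (2 * y)⁻¹) (-(2 * (‖g z‖ ^ 2) ^ 2)⁻¹) (‖g z‖ ^ 2) :=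
    (((hasDerivAt_id _).const_mul 2).inv (by positivity)).congr_deriv (by field_simp)
  convert hg.hasLaplacianAt_comp_norm_sq hF hF' using 1
  field_simp
  ring

theorem Real.exp_two_mul_neg_log_add_half_log {a b : ℝ} (ha : 0 < a) (hb : 0 < b) :
    Real.exp (2 * (-Real.log a + 1 / 2 * Real.log b)) = b / a ^ 2 := by
  rw [show 2 * (-Real.log a + 1 / 2 * Real.log b) = Real.log b - 2 * Real.log a by ring,
    Real.exp_sub, Real.exp_log hb, ← Real.log_rpow ha, Real.exp_log (by positivity)]
  norm_cast

/-- For `f` holomorphic on the unit disk, the function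
`ρ(w) = -log(½(1 - |f(w)|²)) + ½ log|f'(w)|²` satisfies the Liouville equation
`Δρ = e^{2ρ}` (with `Δ = ∂ₓ² + ∂ᵧ² = 4 ∂_w ∂_w̄`) at every point of the disk where
`|f(w)| < 1` and `f'(w) ≠ 0`. -/
theorem liouville_equation (f : ℂ → ℂ)
    (hf : DifferentiableOn ℂ f (Metric.ball 0 1))
    (ρ : ℂ → ℝ)
    (hρ : ∀ w : ℂ, ρ w =
      -Real.log ((1 - ‖f w‖ ^ 2) / 2) +
        (1 / 2) * Real.log (‖deriv f w‖ ^ 2))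
    (w : ℂ) (hw : ‖w‖ < 1)
    (hfw : ‖f w‖ < 1) (hfd : deriv f w ≠ 0) :
    iteratedDeriv 2 (fun x : ℝ => ρ ((x : ℂ) + w.im * Complex.I)) w.re +
      iteratedDeriv 2 (fun y : ℝ => ρ ((w.re : ℂ) + (y : ℂ) * Complex.I)) w.im =
    Real.exp (2 * ρ w) := by
  have hfa : AnalyticAt ℂ f w :=
    hf.analyticAt (Metric.isOpen_ball.mem_nhds (mem_ball_zero_iff.2 hw))
  obtain rfl : ρ = fun w => -Real.log ((1 - ‖f w‖ ^ 2) / 2) + 1 / 2 * Real.log (‖deriv f w‖ ^ 2) :=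
    funext hρ
  have hΔ := (hfa.hasLaplacianAt_neg_log_one_sub_norm_sq hfw).add
    (hfa.deriv.hasLaplacianAt_half_log_norm_sq hfd)
  have hN : 0 < 1 - ‖f w‖ ^ 2 := by nlinarith [norm_nonneg (f w)]
  rw [hΔ.iteratedDeriv_add_iteratedDeriv_eq,
    Real.exp_two_mul_neg_log_add_half_log (by positivity) (by positivity)]
  field_simp
  ring
end

section
/- For c ∈ ℝ, c ≠ 0, the function Ξ(w) = 2(1 - |w|^{2c})/|1 - w^c|² on a simply connected subdomain of the punctured unit disk (avoiding the branch cut and zeros of 1 - w^c) satisfies ∂_w ∂_{w̄} Ξ = 0, i.e., Ξ is harmonic. -/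
/-!
`Ξ` is the real part of the Cayley transform `F = 2 (1 + w^c) / (1 - w^c)`, which is holomorphic
wherever the branch `w^c = exp (c log w)` is and `w^c ≠ 1`: indeed
`Re (2 (1 + ζ) / (1 - ζ)) = 2 (1 - |ζ|²) / |1 - ζ|²` and `|w^c| = |w|^c`. Real parts of holomorphic
functions are harmonic, because along the line `t ↦ p + t u` the second derivative of `Re F` is
`Re (F'' u²)`, and `1² + I² = 0`.
-/

open Complex Filter Topology

section LineSlices

variable {F : ℂ → ℂ} {γ : ℝ → ℂ} {u : ℂ} {t : ℝ}

theorem HasDerivAt.re_comp_line {d : ℂ} (hF : HasDerivAt F d (γ t)) (hγ : HasDerivAt γ u t) :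
    HasDerivAt (fun s => (F (γ s)).re) (d * u).re t := by
  simpa using! reCLM.hasFDerivAt.comp_hasDerivAt t (hF.comp t hγ)

theorem AnalyticAt.deriv_deriv_re_comp_line (hF : AnalyticAt ℂ F (γ t))
    (hγ : ∀ s, HasDerivAt γ u s) :
    deriv (deriv fun s => (F (γ s)).re) t = (deriv (deriv F) (γ t) * u ^ 2).re := by
  have hderiv : deriv (fun s => (F (γ s)).re) =ᶠ[𝓝 t] fun s => (deriv F (γ s) * u).re :=
    ((hγ t).continuousAt.eventually hF.eventually_analyticAt).mono fun s hs =>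
      (hs.differentiableAt.hasDerivAt.re_comp_line (hγ s)).deriv
  have hF' : HasDerivAt (fun v => deriv F v * u) (deriv (deriv F) (γ t) * u) (γ t) :=
    hF.deriv.differentiableAt.hasDerivAt.mul_const u
  rw [hderiv.deriv_eq, (hF'.re_comp_line (hγ t)).deriv, mul_assoc, ← sq]

end LineSlices

theorem iteratedDeriv_two_slices_add_eq_zero_of_eventuallyEq_re {F : ℂ → ℂ} {f : ℂ → ℝ} {z : ℂ}
    (hF : ∀ᶠ v in 𝓝 z, DifferentiableAt ℂ F v) (hf : f =ᶠ[𝓝 z] fun v => (F v).re) :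
    iteratedDeriv 2 (fun x : ℝ => f (x + z.im * I)) z.re +
      iteratedDeriv 2 (fun y : ℝ => f (z.re + y * I)) z.im = 0 := by
  have hFz : AnalyticAt ℂ F z := analyticAt_iff_eventually_differentiableAt.mpr hF
  have hγ₁ : ∀ s : ℝ, HasDerivAt (fun x : ℝ => (x : ℂ) + z.im * I) 1 s := fun s =>
    (hasDerivAt_id (s : ℂ)).comp_ofReal.add_const _
  have hγ₂ : ∀ s : ℝ, HasDerivAt (fun y : ℝ => (z.re : ℂ) + y * I) I s := fun s => by
    simpa using ((hasDerivAt_id (s : ℂ)).comp_ofReal.mul_const I).const_add (z.re : ℂ)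
  have hslice : ∀ {γ : ℝ → ℂ} {u : ℂ} {t : ℝ}, (∀ s, HasDerivAt γ u s) → γ t = z →
      iteratedDeriv 2 (fun s => f (γ s)) t = (deriv (deriv F) z * u ^ 2).re := by
    intro γ u t hγ hγt
    have hcomp : (fun s => f (γ s)) =ᶠ[𝓝 t] fun s => (F (γ s)).re :=
      (hγt ▸ hf).comp_tendsto (hγ t).continuousAt
    have hFγ : AnalyticAt ℂ F (γ t) := hγt ▸ hFz
    rw [iteratedDeriv_succ, iteratedDeriv_one, hcomp.deriv.deriv_eq,
      hFγ.deriv_deriv_re_comp_line hγ, hγt]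
  rw [hslice hγ₁ (re_add_im z), hslice hγ₂ (re_add_im z)]
  simp

theorem re_two_mul_one_add_div_one_sub (ζ : ℂ) :
    (2 * (1 + ζ) / (1 - ζ)).re = 2 * (1 - ‖ζ‖ ^ 2) / ‖1 - ζ‖ ^ 2 := by
  rw [div_re, ← add_div, ← normSq_eq_norm_sq, ← normSq_eq_norm_sq]
  simp only [normSq_apply, mul_re, mul_im, add_re, add_im, sub_re, sub_im, one_re, one_im,
    re_ofNat, im_ofNat]
  ring

theorem norm_exp_ofReal_mul_log (c : ℝ) {v : ℂ} (hv : v ≠ 0) :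
    ‖exp (c * log v)‖ = ‖v‖ ^ c := by
  rw [mul_comm, ← cpow_def_of_ne_zero hv, norm_cpow_real]

theorem singular_superpotential_harmonic_general (c : ℝ)
    (w : ℂ)
    (hslit : w ∈ Complex.slitPlane)
    (hzero : Complex.exp ((c : ℂ) * Complex.log w) ≠ 1) :
    let Ξ : ℂ → ℝ := fun v =>
      2 * (1 - ‖v‖ ^ (2 * c)) /
        ‖1 - Complex.exp ((c : ℂ) * Complex.log v)‖ ^ 2
    iteratedDeriv 2 (fun x : ℝ => Ξ ((x : ℂ) + w.im * Complex.I)) w.re +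
      iteratedDeriv 2 (fun y : ℝ => Ξ ((w.re : ℂ) + (y : ℂ) * Complex.I)) w.im = 0 := by
  intro Ξ
  set e : ℂ → ℂ := fun v => exp (c * log v)
  have he : ∀ v ∈ slitPlane, DifferentiableAt ℂ e v := fun v hv =>
    ((differentiableAt_log hv).const_mul _).cexp
  have hnear : ∀ᶠ v in 𝓝 w, v ∈ slitPlane ∧ e v ≠ 1 :=
    (isOpen_slitPlane.eventually_mem hslit).and ((he w hslit).continuousAt.eventually_ne hzero)
  refine iteratedDeriv_two_slices_add_eq_zero_of_eventuallyEq_re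
    (F := fun v => 2 * (1 + e v) / (1 - e v)) ?_ ?_
  · filter_upwards [hnear] with v ⟨hv, hv1⟩
    exact (((he v hv).const_add 1).const_mul 2).div ((he v hv).const_sub 1)
      (sub_ne_zero.mpr hv1.symm)
  · filter_upwards [hnear] with v ⟨hv, _⟩
    rw [re_two_mul_one_add_div_one_sub, norm_exp_ofReal_mul_log c (slitPlane_ne_zero hv), ← Real.rpow_natCast,
      ← Real.rpow_mul (norm_nonneg v), mul_comm c]
    rfl

/-- For `c ∈ ℝ`, `c ≠ 0`, the superpotential `Ξ(w) = 2(1 - |w|^{2c})/|1 - w^c|²`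
(with `w^c = exp(c log w)` for a branch of the logarithm) is harmonic, i.e.
`Δ Ξ = 4 ∂_w ∂_w̄ Ξ = 0`, at every point of the punctured unit disk away from the
branch cut and the zeros of `1 - w^c`. -/
theorem singular_superpotential_harmonic (c : ℝ) (hc : c ≠ 0)
    (w : ℂ) (hw0 : w ≠ 0) (hw1 : ‖w‖ < 1)
    (hslit : w ∈ Complex.slitPlane)
    (hzero : Complex.exp ((c : ℂ) * Complex.log w) ≠ 1) :
    let Ξ : ℂ → ℝ := fun v =>
      2 * (1 - ‖v‖ ^ (2 * c)) /
        ‖1 - Complex.exp ((c : ℂ) * Complex.log v)‖ ^ 2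
    iteratedDeriv 2 (fun x : ℝ => Ξ ((x : ℂ) + w.im * Complex.I)) w.re +
      iteratedDeriv 2 (fun y : ℝ => Ξ ((w.re : ℂ) + (y : ℂ) * Complex.I)) w.im = 0 :=
  singular_superpotential_harmonic_general c w hslit hzero
end
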